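/- Let g, h be real numbers, set a = g+h and b = g-h, let d ≥ 1 be an integer, and set ξ(η) = P_d^{(g-1/2,1/2-h)}(η) ∈ ℝ[η]. Let Y ∈ ℝ[η] be any polynomial and let X ∈ ℝ[η] satisfy X'(η) = ξ(η)Y(η). For a polynomial p ∈ ℝ[η] define Fp = ½(1+η)(ξ·p' - ξ'·p) + ½(h - ½)ξ·p ∈ ℝ[η]. Then for every polynomial p ∈ ℝ[η] the following polynomial identity holds: 2[ (1-η)·(X·Fp)' - (g + ½)·X·Fp ] = ξ·[ (1-η²) X p'' + ( -(b + (a+1)η)X + (1-η²)ξY ) p' + ( (d(d+1+b) - (g+½)(h-½))X + ((h-½)(1-η)ξ - (1-η²)ξ')Y ) p ]. -/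

import Mathlib

open Polynomial

/-- The Jacobi polynomial `P_n^{(α,β)}` with real parameters:
`P_n^{(α,β)}(x) = Σ_{k=0}^{n} (α+k+1)_{n-k} (n+α+β+1)_k / ((n-k)!·k!) · ((x-1)/2)^k`. -/
noncomputable def jacobiP (α β : ℝ) (n : ℕ) : Polynomial ℝ :=
  ∑ k ∈ Finset.range (n + 1),
    Polynomial.C ((ascPochhammer ℝ (n - k)).eval (α + k + 1) *
        (ascPochhammer ℝ k).eval ((n : ℝ) + α + β + 1) /
        ((n - k).factorial * k.factorial)) *
      (Polynomial.C ((2 : ℝ))⁻¹ * (Polynomial.X - 1)) ^ k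

/-!
In the variable `s = (x - 1) / 2` the Jacobi polynomial `P_n^{(α,β)}` is a terminating
hypergeometric series: the ratio of consecutive coefficients is
`(n - k)(n + k + α + β + 1) / ((k + 1)(k + 1 + α))`, which is exactly the coefficient recursion
of the hypergeometric equation. Changing back to `x` gives the Jacobi equation
`(1 - x²) ξ'' + (β - α - (α + β + 2) x) ξ' + n (n + α + β + 1) ξ = 0`.
Once the derivatives are expanded using `X' = ξ Y`, the two sides of the identity differ by
`-p X` times this equation for `ξ`.
-/
namespace Polynomial

variable {R : Type*} [Semiring R]

theorem coeff_X_mul_derivative (p : R[X]) (k : ℕ) :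
    (X * derivative p).coeff k = p.coeff k * k := by
  cases k with
  | zero => simp
  | succ k => simp [coeff_X_mul, coeff_derivative]

end Polynomial

theorem hypergeometric_ode_of_coeff_succ {R : Type*} [CommRing R] {α c : R} {n : ℕ} {Q : R[X]}
    (hQ : ∀ k : ℕ, ((k : R) + 1) * (k + 1 + α) * Q.coeff (k + 1)
      = ((n : R) - k) * (n + k + c) * Q.coeff k) :
    X * (1 + X) * derivative (derivative Q) + (C (α + 1) + C (c + 1) * X) * derivative Q
      = C (n * (n + c)) * Q := by
  -- With `θ = X * D` the operator is `D (θ + α) + θ (θ + c)`, and `θ X ^ k = k X ^ k`.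
  have euler : X * (1 + X) * derivative (derivative Q) + (C (α + 1) + C (c + 1) * X) * derivative Q
      = derivative (X * derivative Q + C α * Q) + X * derivative (X * derivative Q)
        + C c * (X * derivative Q) := by
    simp only [derivative_mul, derivative_X, derivative_C, map_add, map_one]
    ring
  rw [euler]
  ext k
  simp only [coeff_add, coeff_derivative, coeff_X_mul_derivative, coeff_C_mul]
  push_cast
  linear_combination hQ k

noncomputable def jacobiCoeff (α β : ℝ) (n k : ℕ) : ℝ :=
  (ascPochhammer ℝ (n - k)).eval (α + k + 1) *
    (ascPochhammer ℝ k).eval ((n : ℝ) + α + β + 1) / ((n - k).factorial * k.factorial)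

theorem jacobiCoeff_succ (α β : ℝ) {n k : ℕ} (hk : k < n) :
    ((k : ℝ) + 1) * (k + 1 + α) * jacobiCoeff α β n (k + 1)
      = ((n : ℝ) - k) * (n + k + (α + β + 1)) * jacobiCoeff α β n k := by
  obtain ⟨m, rfl⟩ : ∃ m, n = k + 1 + m := ⟨n - k - 1, by omega⟩
  have hnk : k + 1 + m - k = m + 1 := by omega
  have hnk' : k + 1 + m - (k + 1) = m := by omega
  have hpoch : (ascPochhammer ℝ (m + 1)).eval (α + k + 1)
      = (α + k + 1) * (ascPochhammer ℝ m).eval (α + (k + 1 : ℕ) + 1) := by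
    rw [show α + ((k + 1 : ℕ) : ℝ) + 1 = α + k + 1 + 1 by push_cast; ring]
    simp only [ascPochhammer_succ_left, eval_mul, eval_X, eval_comp, eval_add, eval_one]
  unfold jacobiCoeff
  rw [hnk, hnk', hpoch, ascPochhammer_succ_eval, Nat.factorial_succ, Nat.factorial_succ]
  field_simp
  push_cast
  ring

/-- `P_n^{(α,β)}` in the variable `s = (x - 1) / 2`, in which it is a terminating `₂F₁`. -/
noncomputable def jacobiShifted (α β : ℝ) (n : ℕ) : ℝ[X] :=
  ∑ k ∈ Finset.range (n + 1), C (jacobiCoeff α β n k) * X ^ k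

theorem jacobiP_eq_comp (α β : ℝ) (n : ℕ) :
    jacobiP α β n = (jacobiShifted α β n).comp (C 2⁻¹ * (X - 1)) := by
  simp [jacobiP, jacobiShifted, jacobiCoeff]

theorem coeff_jacobiShifted (α β : ℝ) (n k : ℕ) :
    (jacobiShifted α β n).coeff k = if k ≤ n then jacobiCoeff α β n k else 0 := by
  simp [jacobiShifted]

theorem jacobiShifted_coeff_succ (α β : ℝ) (n k : ℕ) :
    ((k : ℝ) + 1) * (k + 1 + α) * (jacobiShifted α β n).coeff (k + 1)
      = ((n : ℝ) - k) * (n + k + (α + β + 1)) * (jacobiShifted α β n).coeff k := by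
  simp only [coeff_jacobiShifted]
  rcases lt_trichotomy k n with hk | rfl | hk
  · simp [hk, hk.le, jacobiCoeff_succ α β hk]
  · simp
  · simp [hk.not_ge, (hk.trans (Nat.lt_succ_self k)).not_ge]

theorem jacobiP_ode (α β : ℝ) (n : ℕ) :
    (1 - X ^ 2) * derivative (derivative (jacobiP α β n))
      + (C (β - α) - C (α + β + 2) * X) * derivative (jacobiP α β n)
      + C (n * (n + α + β + 1)) * jacobiP α β n = 0 := by
  have hyp := hypergeometric_ode_of_coeff_succ (jacobiShifted_coeff_succ α β n)
  have hs : derivative (C 2⁻¹ * (X - 1) : ℝ[X]) = C 2⁻¹ := by simp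
  rw [jacobiP_eq_comp]
  simp only [derivative_comp, hs, derivative_mul, derivative_C, zero_mul, zero_add]
  refine Polynomial.funext fun t => ?_
  have hyp_t := congrArg (eval (2⁻¹ * (t - 1))) hyp
  simp only [eval_add, eval_sub, eval_mul, eval_pow, eval_comp, eval_C, eval_X, eval_one,
    eval_zero] at hyp_t ⊢
  linear_combination -hyp_t

theorem xjacobi_theta_operator_identity_general (g h : ℝ) (a b : ℝ)
    (ha : a = g + h) (hb : b = g - h) (d : ℕ)
    (ξ : Polynomial ℝ) (hξ : ξ = jacobiP (g - 1/2) (1/2 - h) d)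
    (Y XX : Polynomial ℝ) (hX : Polynomial.derivative XX = ξ * Y)
    (p : Polynomial ℝ)
    (Fp : Polynomial ℝ)
    (hFp : Fp = Polynomial.C ((2 : ℝ))⁻¹ * (1 + Polynomial.X) *
        (ξ * Polynomial.derivative p - Polynomial.derivative ξ * p)
      + Polynomial.C ((h - 1/2) / 2) * ξ * p) :
    2 * ((1 - Polynomial.X) * Polynomial.derivative (XX * Fp)
        - Polynomial.C (g + 1/2) * (XX * Fp))
    = ξ * ((1 - Polynomial.X ^ 2) * XX * Polynomial.derivative (Polynomial.derivative p)
        + (-((Polynomial.C b + Polynomial.C (a + 1) * Polynomial.X) * XX)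
            + (1 - Polynomial.X ^ 2) * ξ * Y) * Polynomial.derivative p
        + (Polynomial.C ((d : ℝ) * ((d : ℝ) + 1 + b) - (g + 1/2) * (h - 1/2)) * XX
            + (Polynomial.C (h - 1/2) * (1 - Polynomial.X) * ξ
                - (1 - Polynomial.X ^ 2) * Polynomial.derivative ξ) * Y) * p) := by
  have ode := jacobiP_ode (g - 1/2) (1/2 - h) d
  rw [← hξ] at ode
  subst ha hb hFp
  refine Polynomial.funext fun t => ?_
  have ode_t := congrArg (eval t) ode
  simp only [derivative_mul, derivative_add, derivative_sub, derivative_C, derivative_X,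
    derivative_one, hX]
  simp only [eval_mul, eval_add, eval_sub, eval_pow, eval_C, eval_X, eval_one, eval_neg,
    eval_ofNat, eval_zero] at ode_t ⊢
  linear_combination (-(p.eval t * XX.eval t)) * ode_t

/-- one-indexed (type I) Jacobi case with index `d ≥ 1`, denominator
polynomial `ξ = P_d^{(g-1/2,1/2-h)}`, `a = g+h`, `b = g-h`, and `X` with `X' = ξY`.
With `Fp = ½(1+η)(ξp' - ξ'p) + ½(h-½)ξp`, for every polynomial `p`:
`2[(1-η)(X·Fp)' - (g+½)X·Fp]
  = ξ·[(1-η²)Xp'' + (-(b+(a+1)η)X + (1-η²)ξY)p'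
      + ((d(d+1+b) - (g+½)(h-½))X + ((h-½)(1-η)ξ - (1-η²)ξ')Y)p]`. -/
theorem xjacobi_theta_operator_identity (g h : ℝ) (a b : ℝ)
    (ha : a = g + h) (hb : b = g - h) (d : ℕ) (hd : 1 ≤ d)
    (ξ : Polynomial ℝ) (hξ : ξ = jacobiP (g - 1/2) (1/2 - h) d)
    (Y XX : Polynomial ℝ) (hX : Polynomial.derivative XX = ξ * Y)
    (p : Polynomial ℝ)
    (Fp : Polynomial ℝ)
    (hFp : Fp = Polynomial.C ((2 : ℝ))⁻¹ * (1 + Polynomial.X) *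
        (ξ * Polynomial.derivative p - Polynomial.derivative ξ * p)
      + Polynomial.C ((h - 1/2) / 2) * ξ * p) :
    2 * ((1 - Polynomial.X) * Polynomial.derivative (XX * Fp)
        - Polynomial.C (g + 1/2) * (XX * Fp))
    = ξ * ((1 - Polynomial.X ^ 2) * XX * Polynomial.derivative (Polynomial.derivative p)
        + (-((Polynomial.C b + Polynomial.C (a + 1) * Polynomial.X) * XX)
            + (1 - Polynomial.X ^ 2) * ξ * Y) * Polynomial.derivative p
        + (Polynomial.C ((d : ℝ) * ((d : ℝ) + 1 + b) - (g + 1/2) * (h - 1/2)) * XX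
            + (Polynomial.C (h - 1/2) * (1 - Polynomial.X) * ξ
                - (1 - Polynomial.X ^ 2) * Polynomial.derivative ξ) * Y) * p) :=
  xjacobi_theta_operator_identity_general g h a b ha hb d ξ hξ Y XX hX p Fp hFp
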